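/- arXiv:1909.01721 — 2 statements merged into one kernel-verified Lean document; each statement's English description precedes it below -/
import Mathlib

section
/- Let C₁ (radius r₁) and C₂ (radius r₂) be externally tangent circles, C₂ centered at the origin with tangency point p₁ = (r₂, 0) and C₁ centered at (r₁+r₂, 0)... Let C (radius r) be externally tangent to C₁ at angle φ (measured at the center of C₁ from p₁) and externally tangent to C₂, lying outside both. Then r = 2r₁r₂/(r₂ − r₁ + (r₂+r₁)cos φ) − r₁, and this is an increasing function of φ on (0, arccos((r₁−r₂)/(r₁+r₂))]. -/
open Real

/-- A point of the plane with the given coordinates. -/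
noncomputable def pt (x y : ℝ) : EuclideanSpace ℝ (Fin 2) := WithLp.toLp 2 ![x, y]

/-- Lemma on externally tangent circles: `C₁` has radius `r₁` and center the origin,
and is externally tangent to `C₂` of radius `r₂` at `p₁ = (r₁,0)` (so `C₂` is
centered at `(r₁+r₂,0)`).  A circle `C` of radius `r > 0` externally tangent to
`C₁` at `p₂ = (r₁ cos φ, r₁ sin φ)` (center `((r₁+r) cos φ, (r₁+r) sin φ)`) and
externally tangent to `C₂` satisfies `r = 2r₁r₂/(r₂ − r₁ + (r₂+r₁)cos φ) − r₁`;
moreover this expression is a strictly increasing function of `φ` on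
`(0, arccos((r₁−r₂)/(r₁+r₂)))` (the endpoint corresponding to an infinite radius). -/
theorem outer_tangent_radius_formula_and_mono (r₁ r₂ : ℝ) (hr₁ : 0 < r₁) (hr₂ : 0 < r₂) :
    (∀ r φ : ℝ, 0 < r → 0 < φ → φ ≤ arccos ((r₁ - r₂) / (r₁ + r₂)) →
      dist (pt ((r₁ + r) * cos φ) ((r₁ + r) * sin φ)) (pt (r₁ + r₂) 0) = r + r₂ →
      r = 2 * r₁ * r₂ / (r₂ - r₁ + (r₂ + r₁) * cos φ) - r₁) ∧
    StrictMonoOn (fun φ : ℝ => 2 * r₁ * r₂ / (r₂ - r₁ + (r₂ + r₁) * cos φ) - r₁)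
      (Set.Ioo 0 (arccos ((r₁ - r₂) / (r₁ + r₂)))) := by
  have hbd : (r₁ - r₂) / (r₁ + r₂) < 1 := by
    rw [div_lt_one (by linarith)]; linarith
  have hbd' : -1 ≤ (r₁ - r₂) / (r₁ + r₂) := by
    rw [le_div_iff₀ (by linarith : (0:ℝ) < r₁ + r₂)]; linarith
  constructor
  · intro r φ hr hφ hφ' hdist
    -- cos φ ≥ (r₁ - r₂)/(r₁+r₂)
    have hcos : (r₁ - r₂) / (r₁ + r₂) ≤ cos φ := by
      have := Real.cos_arccos hbd' hbd.le
      calc (r₁ - r₂) / (r₁ + r₂) = cos (arccos ((r₁ - r₂) / (r₁ + r₂))) := this.symm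
        _ ≤ cos φ := Real.cos_le_cos_of_nonneg_of_le_pi hφ.le (Real.arccos_le_pi _) hφ'
    have hD0 : 0 ≤ r₂ - r₁ + (r₂ + r₁) * cos φ := by
      have := (div_le_iff₀ (show (0:ℝ) < r₁ + r₂ by linarith)).mp hcos
      nlinarith
    -- turn dist equation into algebraic one
    have hsq : ((r₁ + r) * cos φ - (r₁ + r₂)) ^ 2 + ((r₁ + r) * sin φ - 0) ^ 2
        = (r + r₂) ^ 2 := by
      have h2 : dist (pt ((r₁ + r) * cos φ) ((r₁ + r) * sin φ)) (pt (r₁ + r₂) 0) ^ 2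
          = (r + r₂) ^ 2 := by rw [hdist]
      rw [EuclideanSpace.dist_eq, Real.sq_sqrt (by positivity)] at h2
      simp [pt, Fin.sum_univ_two, Real.dist_eq, mul_pow, sq_abs] at h2
      linear_combination h2
    have hpyth := Real.sin_sq_add_cos_sq φ
    -- key: r * D = r₁ (r₁ + r₂)(1 - cos φ)
    have hkey : r * (r₂ - r₁ + (r₂ + r₁) * cos φ) = r₁ * (r₁ + r₂) * (1 - cos φ) := by
      linear_combination (-1/2) * hsq + ((r₁ + r) ^ 2 / 2) * hpyth
    have hcos1 : cos φ < 1 := by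
      have h := Real.cos_lt_cos_of_nonneg_of_le_pi le_rfl
        (le_trans hφ' (Real.arccos_le_pi _)) hφ
      simpa using h
    have hD : 0 < r₂ - r₁ + (r₂ + r₁) * cos φ := by
      rcases hD0.lt_or_eq with h | h
      · exact h
      · exfalso
        rw [← h, mul_zero] at hkey
        nlinarith
    field_simp
    nlinarith [hkey]
  · intro a ha b hb hab
    have hcos_a : (r₁ - r₂) / (r₁ + r₂) < cos a := by
      have := Real.cos_arccos hbd' hbd.le
      calc (r₁ - r₂) / (r₁ + r₂) = cos (arccos ((r₁ - r₂) / (r₁ + r₂))) := this.symm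
        _ < cos a := Real.cos_lt_cos_of_nonneg_of_le_pi ha.1.le (Real.arccos_le_pi _) ha.2
    have hcos_b : (r₁ - r₂) / (r₁ + r₂) < cos b := by
      have := Real.cos_arccos hbd' hbd.le
      calc (r₁ - r₂) / (r₁ + r₂) = cos (arccos ((r₁ - r₂) / (r₁ + r₂))) := this.symm
        _ < cos b := Real.cos_lt_cos_of_nonneg_of_le_pi hb.1.le (Real.arccos_le_pi _) hb.2
    have hDa : 0 < r₂ - r₁ + (r₂ + r₁) * cos a := by
      have := (div_lt_iff₀ (show (0:ℝ) < r₁ + r₂ by linarith)).mp hcos_a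
      nlinarith
    have hDb : 0 < r₂ - r₁ + (r₂ + r₁) * cos b := by
      have := (div_lt_iff₀ (show (0:ℝ) < r₁ + r₂ by linarith)).mp hcos_b
      nlinarith
    have hcab : cos b < cos a :=
      Real.cos_lt_cos_of_nonneg_of_le_pi ha.1.le
        (le_trans hb.2.le (Real.arccos_le_pi _)) hab
    have hDlt : r₂ - r₁ + (r₂ + r₁) * cos b < r₂ - r₁ + (r₂ + r₁) * cos a := by
      nlinarith
    have : 2 * r₁ * r₂ / (r₂ - r₁ + (r₂ + r₁) * cos a)
        < 2 * r₁ * r₂ / (r₂ - r₁ + (r₂ + r₁) * cos b) :=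
      div_lt_div_of_pos_left (by positivity) hDb hDlt
    simpa using sub_lt_sub_right this r₁
end

section
/- Let A, A', B', B be four points in this cyclic order on a minor arc of a circle C (central angle of arc AB less than π). Suppose a pair of mutually externally tangent circles is internally tangent to C at A and B respectively, and a second pair of mutually externally tangent circles, disjoint from the first pair, is internally tangent to C at A' and B' respectively, with all four small circles inside C. Then the arc A'B' is strictly shorter than each of the arcs AA' and B'B. -/
open Real

lemma dist_O_pt (O : EuclideanSpace ℝ (Fin 2)) (r θ : ℝ) (hr : 0 ≤ r) :
    dist O (O + pt (r * cos θ) (r * sin θ)) = r := by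
  rw [EuclideanSpace.dist_eq]
  simp [pt, Fin.sum_univ_two, Real.dist_eq]
  rw [show (r * cos θ) ^ 2 + (r * sin θ) ^ 2 = r ^ 2 by nlinarith [sin_sq_add_cos_sq θ]]
  exact Real.sqrt_sq hr

lemma dist_sq_pt (O : EuclideanSpace ℝ (Fin 2)) (a b θ φ : ℝ) :
    dist (O + pt (a * cos θ) (a * sin θ)) (O + pt (b * cos φ) (b * sin φ)) ^ 2
      = a ^ 2 + b ^ 2 - 2 * a * b * cos (φ - θ) := by
  rw [EuclideanSpace.dist_eq]
  rw [Real.sq_sqrt (by positivity)]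
  simp [pt, Fin.sum_univ_two, Real.dist_eq, cos_sub]
  ring_nf
  nlinarith [sin_sq_add_cos_sq θ, sin_sq_add_cos_sq φ]

lemma tangent_center (O c : EuclideanSpace ℝ (Fin 2)) (r ρ θ : ℝ)
    (hr : 0 < r) (hρr : ρ < r)
    (h1 : dist O c = r - ρ) (h2 : dist c (O + pt (r * cos θ) (r * sin θ)) = ρ) :
    c = O + pt ((r - ρ) * cos θ) ((r - ρ) * sin θ) := by
  set P := O + pt (r * cos θ) (r * sin θ) with hP
  have hOP : dist O P = r := dist_O_pt O r θ hr.le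
  have hw : Wbtw ℝ O c P := by
    rw [← dist_add_dist_eq_iff, h1, h2, hOP]; ring
  rw [← mem_segment_iff_wbtw] at hw
  obtain ⟨a, b, ha, hb, hab, hc⟩ := hw
  have hdist : dist O c = b * r := by
    rw [← hc, dist_eq_norm]
    have : O - (a • O + b • P) = b • (O - P) := by
      rw [show a = 1 - b by linarith]; module
    rw [this, norm_smul, ← dist_eq_norm, hOP, Real.norm_eq_abs, abs_of_nonneg hb]
  have hbval : b = (r - ρ) / r := by
    field_simp
    linarith [hdist ▸ h1]
  rw [← hc, hbval, show a = 1 - (r - ρ) / r by rw [← hab, hbval]; ring]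
  ext i
  fin_cases i <;>
    · simp [pt, hP]
      field_simp
      ring

lemma circles_meet (c c' : EuclideanSpace ℝ (Fin 2)) (ρ ρ' : ℝ)
    (hρ : 0 < ρ) (hρ' : 0 < ρ') (hd : 0 < dist c c')
    (h1 : dist c c' ≤ ρ + ρ') (h2 : |ρ - ρ'| ≤ dist c c') :
    (Metric.sphere c ρ ∩ Metric.sphere c' ρ').Nonempty := by
  set d := dist c c' with hdd
  set v0 := c' 0 - c 0 with hv0
  set v1 := c' 1 - c 1 with hv1
  have hdsq : d ^ 2 = v0 ^ 2 + v1 ^ 2 := by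
    rw [hdd, EuclideanSpace.dist_eq, Real.sq_sqrt (by positivity)]
    simp [Fin.sum_univ_two, Real.dist_eq, hv0, hv1]
    ring
  set s := (d ^ 2 + ρ ^ 2 - ρ' ^ 2) / (2 * d) with hs
  have hsnn : ρ ^ 2 - s ^ 2 ≥ 0 := by
    have h2' : (ρ - ρ') ^ 2 ≤ d ^ 2 := by
      nlinarith [mul_self_le_mul_self (abs_nonneg (ρ - ρ')) h2, sq_abs (ρ - ρ')]
    have h1' : d ^ 2 ≤ (ρ + ρ') ^ 2 := by nlinarith
    have key : 4 * d ^ 2 * (ρ ^ 2 - s ^ 2) = ((ρ + ρ') ^ 2 - d ^ 2) * (d ^ 2 - (ρ - ρ') ^ 2) := by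
      rw [hs]; field_simp; ring
    have hpos : (0:ℝ) < 4 * d ^ 2 := by positivity
    nlinarith [mul_nonneg (sub_nonneg.2 h1') (sub_nonneg.2 h2'), key, hpos]
  set h := Real.sqrt (ρ ^ 2 - s ^ 2) with hh
  have hhsq : h ^ 2 = ρ ^ 2 - s ^ 2 := Real.sq_sqrt hsnn
  have e0 : s ^ 2 + h ^ 2 = ρ ^ 2 := by linarith
  have h2sd : 2 * s * d = d ^ 2 + ρ ^ 2 - ρ' ^ 2 := by rw [hs]; field_simp
  have e1 : (s - d) ^ 2 + h ^ 2 = ρ' ^ 2 := by nlinarith [hhsq, h2sd]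
  have hdne : d ≠ 0 := ne_of_gt hd
  refine ⟨pt (c 0 + (s * v0 - h * v1) / d) (c 1 + (s * v1 + h * v0) / d), ?_, ?_⟩
  · rw [Metric.mem_sphere, EuclideanSpace.dist_eq]
    have hsum : ∑ i : Fin 2, dist ((pt (c 0 + (s * v0 - h * v1) / d) (c 1 + (s * v1 + h * v0) / d)) i) (c i) ^ 2 = ρ ^ 2 := by
      simp only [Fin.sum_univ_two, Real.dist_eq, pt, Matrix.cons_val_zero, Matrix.cons_val_one,
        Matrix.head_cons, sq_abs, PiLp.toLp_apply]
      field_simp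
      linear_combination (v0 ^ 2 + v1 ^ 2) * e0 - ρ ^ 2 * hdsq
    rw [hsum, Real.sqrt_sq hρ.le]
  · rw [Metric.mem_sphere, EuclideanSpace.dist_eq]
    have hsum : ∑ i : Fin 2, dist ((pt (c 0 + (s * v0 - h * v1) / d) (c 1 + (s * v1 + h * v0) / d)) i) (c' i) ^ 2 = ρ' ^ 2 := by
      simp only [Fin.sum_univ_two, Real.dist_eq, pt, Matrix.cons_val_zero, Matrix.cons_val_one,
        Matrix.head_cons, sq_abs, PiLp.toLp_apply]
      have r0 : c 0 + (s * v0 - h * v1) / d - c' 0 = ((s - d) * v0 - h * v1) / d := by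
        rw [hv0]; field_simp; ring
      have r1 : c 1 + (s * v1 + h * v0) / d - c' 1 = ((s - d) * v1 + h * v0) / d := by
        rw [hv1]; field_simp; ring
      rw [r0, r1]
      field_simp
      linear_combination (v0 ^ 2 + v1 ^ 2) * e1 - ρ' ^ 2 * hdsq
    rw [hsum, Real.sqrt_sq hρ'.le]

/-- Disjoint circles internally tangent to the big circle must be mutually external. -/
lemma disjoint_sep (O c c' P P' : EuclideanSpace ℝ (Fin 2)) (r ρ ρ' : ℝ)
    (hρ : 0 < ρ) (hρ' : 0 < ρ')
    (hOP : dist O P = r) (hOP' : dist O P' = r)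
    (hc : dist O c = r - ρ) (hcP : dist c P = ρ)
    (hc' : dist O c' = r - ρ') (hc'P : dist c' P' = ρ')
    (hd : Metric.sphere c ρ ∩ Metric.sphere c' ρ' = ∅) :
    ρ + ρ' < dist c c' := by
  by_contra hle
  push_neg at hle
  rcases lt_or_ge (dist c c') |ρ - ρ'| with hn | hge
  · rcases le_or_gt ρ ρ' with hcase | hcase
    · have habs : |ρ - ρ'| = ρ' - ρ := by rw [abs_sub_comm]; exact abs_of_nonneg (by linarith)
      have : dist O P ≤ dist O c' + dist c' c + dist c P := dist_triangle4 O c' c P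
      rw [hOP, hc', hcP, dist_comm c' c] at this
      rw [habs] at hn
      linarith
    · have habs : |ρ - ρ'| = ρ - ρ' := abs_of_nonneg (by linarith)
      have : dist O P' ≤ dist O c + dist c c' + dist c' P' := dist_triangle4 O c c' P'
      rw [hOP', hc, hc'P] at this
      rw [habs] at hn
      linarith
  · rcases eq_or_lt_of_le (dist_nonneg (x := c) (y := c')) with h0 | h0
    · have hcc : c = c' := by
        rw [← dist_eq_zero]; exact h0.symm
      have hρρ : ρ = ρ' := by
        have : |ρ - ρ'| ≤ 0 := by rw [← h0] at hge; exact hge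
        have := abs_nonneg (ρ - ρ')
        have : |ρ - ρ'| = 0 := le_antisymm ‹|ρ - ρ'| ≤ 0› this
        have := abs_eq_zero.mp this
        linarith
      obtain ⟨x, hx⟩ : (Metric.sphere c ρ).Nonempty :=
        NormedSpace.sphere_nonempty.mpr hρ.le
      have : x ∈ Metric.sphere c ρ ∩ Metric.sphere c' ρ' := by
        refine ⟨hx, ?_⟩
        rw [← hcc, ← hρρ]; exact hx
      rw [hd] at this
      exact this
    · obtain ⟨x, hx⟩ := circles_meet c c' ρ ρ' hρ hρ' h0 hle hge
      rw [hd] at hx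
      exact hx

lemma half_angle_sq (a b Δ D : ℝ) (ha : 0 < a) (hb : 0 < b)
    (hD : D ^ 2 = a ^ 2 + b ^ 2 - 2 * a * b * cos Δ) :
    D ^ 2 = (a - b) ^ 2 + 4 * a * b * sin (Δ / 2) ^ 2 := by
  have hc : cos Δ = 1 - 2 * sin (Δ / 2) ^ 2 := by
    have h1 : cos (2 * (Δ / 2)) = 2 * cos (Δ / 2) ^ 2 - 1 := Real.cos_two_mul _
    rw [show 2 * (Δ / 2) = Δ by ring] at h1
    have h2 := sin_sq_add_cos_sq (Δ / 2)
    linarith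
  rw [hD, hc]; ring

lemma final_trig (x m y : ℝ) (hx : 0 < x) (hm : 0 < m) (hy : 0 < y)
    (hS : x + m + y < π / 2)
    (h : sin m * sin (x + m + y) < sin x * sin y) : m < x ∧ m < y := by
  have hπ := Real.pi_pos
  have hsx : 0 < sin x := sin_pos_of_pos_of_lt_pi hx (by linarith)
  have hsy : 0 < sin y := sin_pos_of_pos_of_lt_pi hy (by linarith)
  have hsm : 0 < sin m := sin_pos_of_pos_of_lt_pi hm (by linarith)
  constructor
  · by_contra h'
    push_neg at h'
    have h1 : sin x ≤ sin m :=
      Real.strictMonoOn_sin.monotoneOn ⟨by linarith, by linarith⟩ ⟨by linarith, by linarith⟩ h'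
    have h2 : sin y < sin (x + m + y) :=
      Real.sin_lt_sin_of_lt_of_le_pi_div_two (by linarith) (by linarith) (by linarith)
    nlinarith
  · by_contra h'
    push_neg at h'
    have h1 : sin y ≤ sin m :=
      Real.strictMonoOn_sin.monotoneOn ⟨by linarith, by linarith⟩ ⟨by linarith, by linarith⟩ h'
    have h2 : sin x < sin (x + m + y) :=
      Real.sin_lt_sin_of_lt_of_le_pi_div_two (by linarith) (by linarith) (by linarith)
    nlinarith


/-- Main geometric lemma: `A, A', B', B` lie in this cyclic order on a minor arc
(central angle `< π`) of the circle `C` with center `O` and radius `r`; the points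
are given by angles `θA < θA' < θB' < θB` with `θB − θA < π`.  A pair of mutually
externally tangent circles lies inside `C`, internally tangent to `C` at `A` and
`B` respectively, and a second such pair, disjoint from the first, is internally
tangent to `C` at `A'` and `B'`.  Then the arc `A'B'` is strictly shorter than each
of the arcs `AA'` and `B'B`. -/
theorem middle_arc_shorter
    (O : EuclideanSpace ℝ (Fin 2)) (r : ℝ) (hr : 0 < r)
    (θA θA' θB' θB : ℝ)
    (h₁ : θA < θA') (h₂ : θA' < θB') (h₃ : θB' < θB) (hminor : θB - θA < π)
    (cA cB cA' cB' : EuclideanSpace ℝ (Fin 2)) (ρA ρB ρA' ρB' : ℝ)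
    (hρA : 0 < ρA) (hρAr : ρA < r) (hρB : 0 < ρB) (hρBr : ρB < r)
    (hρA' : 0 < ρA') (hρA'r : ρA' < r) (hρB' : 0 < ρB') (hρB'r : ρB' < r)
    -- internal tangency to `C` at the four points
    (htA : dist O cA = r - ρA ∧ dist cA (O + pt (r * cos θA) (r * sin θA)) = ρA)
    (htB : dist O cB = r - ρB ∧ dist cB (O + pt (r * cos θB) (r * sin θB)) = ρB)
    (htA' : dist O cA' = r - ρA' ∧ dist cA' (O + pt (r * cos θA') (r * sin θA')) = ρA')
    (htB' : dist O cB' = r - ρB' ∧ dist cB' (O + pt (r * cos θB') (r * sin θB')) = ρB')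
    -- each pair is mutually externally tangent
    (hpair₁ : dist cA cB = ρA + ρB)
    (hpair₂ : dist cA' cB' = ρA' + ρB')
    -- the two pairs have no crossing and no touching points
    (hd₁ : Metric.sphere cA ρA ∩ Metric.sphere cA' ρA' = ∅)
    (hd₂ : Metric.sphere cA ρA ∩ Metric.sphere cB' ρB' = ∅)
    (hd₃ : Metric.sphere cB ρB ∩ Metric.sphere cA' ρA' = ∅)
    (hd₄ : Metric.sphere cB ρB ∩ Metric.sphere cB' ρB' = ∅) :
    θB' - θA' < θA' - θA ∧ θB' - θA' < θB - θB' := by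
  have hπ := Real.pi_pos
  have hcA := tangent_center O cA r ρA θA hr hρAr htA.1 htA.2
  have hcB := tangent_center O cB r ρB θB hr hρBr htB.1 htB.2
  have hcA' := tangent_center O cA' r ρA' θA' hr hρA'r htA'.1 htA'.2
  have hcB' := tangent_center O cB' r ρB' θB' hr hρB'r htB'.1 htB'.2
  -- tangency equations
  have eq1 : ρA * ρB = (r - ρA) * (r - ρB) * sin ((θB - θA) / 2) ^ 2 := by
    have hD : dist cA cB ^ 2
        = (r - ρA) ^ 2 + (r - ρB) ^ 2 - 2 * (r - ρA) * (r - ρB) * cos (θB - θA) := by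
      rw [hcA, hcB]; exact dist_sq_pt O (r - ρA) (r - ρB) θA θB
    have h2 := half_angle_sq (r - ρA) (r - ρB) (θB - θA) (dist cA cB)
      (by linarith) (by linarith) hD
    rw [hpair₁] at h2
    linear_combination h2 / 4
  have eq2 : ρA' * ρB' = (r - ρA') * (r - ρB') * sin ((θB' - θA') / 2) ^ 2 := by
    have hD : dist cA' cB' ^ 2
        = (r - ρA') ^ 2 + (r - ρB') ^ 2 - 2 * (r - ρA') * (r - ρB') * cos (θB' - θA') := by
      rw [hcA', hcB']; exact dist_sq_pt O (r - ρA') (r - ρB') θA' θB'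
    have h2 := half_angle_sq (r - ρA') (r - ρB') (θB' - θA') (dist cA' cB')
      (by linarith) (by linarith) hD
    rw [hpair₂] at h2
    linear_combination h2 / 4
  -- disjointness inequalities
  have sep1 : ρA + ρA' < dist cA cA' :=
    disjoint_sep O cA cA' (O + pt (r * cos θA) (r * sin θA))
      (O + pt (r * cos θA') (r * sin θA')) r ρA ρA' hρA hρA'
      (dist_O_pt O r θA hr.le) (dist_O_pt O r θA' hr.le)
      htA.1 htA.2 htA'.1 htA'.2 hd₁
  have sep4 : ρB + ρB' < dist cB cB' :=
    disjoint_sep O cB cB' (O + pt (r * cos θB) (r * sin θB))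
      (O + pt (r * cos θB') (r * sin θB')) r ρB ρB' hρB hρB'
      (dist_O_pt O r θB hr.le) (dist_O_pt O r θB' hr.le)
      htB.1 htB.2 htB'.1 htB'.2 hd₄
  have ineq1 : ρA * ρA' < (r - ρA) * (r - ρA') * sin ((θA' - θA) / 2) ^ 2 := by
    have hD : dist cA cA' ^ 2
        = (r - ρA) ^ 2 + (r - ρA') ^ 2 - 2 * (r - ρA) * (r - ρA') * cos (θA' - θA) := by
      rw [hcA, hcA']; exact dist_sq_pt O (r - ρA) (r - ρA') θA θA'
    have h2 := half_angle_sq (r - ρA) (r - ρA') (θA' - θA) (dist cA cA')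
      (by linarith) (by linarith) hD
    have hsq : (ρA + ρA') ^ 2 < dist cA cA' ^ 2 := by
      have h := mul_self_lt_mul_self (by positivity) sep1
      nlinarith only [h]
    linarith only [h2, hsq]
  have ineq4 : ρB * ρB' < (r - ρB) * (r - ρB') * sin ((θB - θB') / 2) ^ 2 := by
    have hD : dist cB cB' ^ 2
        = (r - ρB) ^ 2 + (r - ρB') ^ 2 - 2 * (r - ρB) * (r - ρB') * cos (θB' - θB) := by
      rw [hcB, hcB']; exact dist_sq_pt O (r - ρB) (r - ρB') θB θB'
    have hflip : sin ((θB' - θB) / 2) ^ 2 = sin ((θB - θB') / 2) ^ 2 := by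
      rw [show (θB' - θB) / 2 = -((θB - θB') / 2) by ring, Real.sin_neg]; ring
    have h2 := half_angle_sq (r - ρB) (r - ρB') (θB' - θB) (dist cB cB')
      (by linarith) (by linarith) hD
    rw [hflip] at h2
    have hsq : (ρB + ρB') ^ 2 < dist cB cB' ^ 2 := by
      have h := mul_self_lt_mul_self (by positivity) sep4
      nlinarith only [h]
    linarith only [h2, hsq]
  clear hcA hcB hcA' hcB' htA htB htA' htB' hd₁ hd₂ hd₃ hd₄ hpair₁ hpair₂ sep1 sep4
  -- pure trigonometry from here on
  set x := (θA' - θA) / 2 with hxdef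
  set m := (θB' - θA') / 2 with hmdef
  set y := (θB - θB') / 2 with hydef
  have hx : 0 < x := by rw [hxdef]; linarith
  have hm : 0 < m := by rw [hmdef]; linarith
  have hy : 0 < y := by rw [hydef]; linarith
  have hSsum : x + m + y = (θB - θA) / 2 := by rw [hxdef, hmdef, hydef]; ring
  have hS : x + m + y < π / 2 := by rw [hSsum]; linarith
  rw [show (θB - θA) / 2 = x + m + y from hSsum.symm] at eq1
  have hsx : 0 < sin x := sin_pos_of_pos_of_lt_pi hx (by linarith)
  have hsy : 0 < sin y := sin_pos_of_pos_of_lt_pi hy (by linarith)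
  have hsm : 0 < sin m := sin_pos_of_pos_of_lt_pi hm (by linarith)
  have hsS : 0 < sin (x + m + y) := sin_pos_of_pos_of_lt_pi (by linarith) (by linarith)
  have hprod : (sin m * sin (x + m + y)) ^ 2 < (sin x * sin y) ^ 2 := by
    have hmul : ρA * ρA' * (ρB * ρB')
        < ((r - ρA) * (r - ρA') * sin x ^ 2) * ((r - ρB) * (r - ρB') * sin y ^ 2) := by
      have p1 : 0 < ρA * ρA' := by positivity
      have p2 : 0 < ρB * ρB' := by positivity
      have q2 : 0 < (r - ρB) * (r - ρB') * sin y ^ 2 := by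
        have : (0:ℝ) < r - ρB := by linarith
        have : (0:ℝ) < r - ρB' := by linarith
        positivity
      calc ρA * ρA' * (ρB * ρB')
          < ((r - ρA) * (r - ρA') * sin x ^ 2) * (ρB * ρB') :=
            (mul_lt_mul_iff_left₀ p2).2 ineq1
        _ < ((r - ρA) * (r - ρA') * sin x ^ 2) * ((r - ρB) * (r - ρB') * sin y ^ 2) := by
            have q1 : 0 < (r - ρA) * (r - ρA') * sin x ^ 2 := lt_trans p1 ineq1
            exact (mul_lt_mul_iff_right₀ q1).2 ineq4
    have hP : 0 < (r - ρA) * (r - ρB) * ((r - ρA') * (r - ρB')) := by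
      have h1 : (0:ℝ) < r - ρA := by linarith
      have h2 : (0:ℝ) < r - ρB := by linarith
      have h3 : (0:ℝ) < r - ρA' := by linarith
      have h4 : (0:ℝ) < r - ρB' := by linarith
      positivity
    have hEE : ρA * ρA' * (ρB * ρB')
        = ((r - ρA) * (r - ρB) * ((r - ρA') * (r - ρB'))) * (sin m * sin (x + m + y)) ^ 2 := by
      calc ρA * ρA' * (ρB * ρB') = (ρA * ρB) * (ρA' * ρB') := by ring
        _ = ((r - ρA) * (r - ρB) * sin (x + m + y) ^ 2)
            * ((r - ρA') * (r - ρB') * sin m ^ 2) := by rw [eq1, eq2]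
        _ = ((r - ρA) * (r - ρB) * ((r - ρA') * (r - ρB')))
            * (sin m * sin (x + m + y)) ^ 2 := by ring
    have hlt2 : ((r - ρA) * (r - ρB) * ((r - ρA') * (r - ρB'))) * (sin m * sin (x + m + y)) ^ 2
        < ((r - ρA) * (r - ρB) * ((r - ρA') * (r - ρB'))) * (sin x * sin y) ^ 2 := by
      rw [← hEE]
      calc ρA * ρA' * (ρB * ρB')
          < ((r - ρA) * (r - ρA') * sin x ^ 2) * ((r - ρB) * (r - ρB') * sin y ^ 2) := hmul
        _ = ((r - ρA) * (r - ρB) * ((r - ρA') * (r - ρB'))) * (sin x * sin y) ^ 2 := by ring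
    exact lt_of_mul_lt_mul_left hlt2 hP.le
  have hlt : sin m * sin (x + m + y) < sin x * sin y := by
    nlinarith only [mul_pos hsm hsS, mul_pos hsx hsy, hprod]
  obtain ⟨r1, r2⟩ := final_trig x m y hx hm hy hS hlt
  rw [hxdef, hmdef] at r1
  rw [hydef, hmdef] at r2
  constructor <;> [skip; skip] <;> first
    | linarith [r1]
    | linarith [r2]
end
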